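/- With notation as in the mean value setting for a polygon, the gradient of the half-angle tangent tⱼ = tan(αⱼ/2), viewed as a function of x, is ∇tⱼ = (tⱼ/sin αⱼ)·(eⱼ^⊥/rⱼ − e_{j+1}^⊥/r_{j+1}), provided sin αⱼ ≠ 0. -/

import Mathlib

open Real

noncomputable abbrev E2 := EuclideanSpace ℝ (Fin 2)

/-- Rotation of a vector in `ℝ²` by `+π/2`. -/
noncomputable def perpE (v : E2) : E2 := WithLp.toLp 2 ![-(v 1), v 0]

/-- The 2D cross product. -/
noncomputable def crossE (v w : E2) : ℝ := v 0 * w 1 - v 1 * w 0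

/-- The 2D dot product. -/
noncomputable def dotE (v w : E2) : ℝ := v 0 * w 0 + v 1 * w 1

/-!
Seen from `y`, the unit vector `e = (p - y)/‖p - y‖` turns as `y` moves: its derivative
in the direction `h` is `-(⟪e^⊥, h⟫ / ‖p - y‖) e^⊥`. If two unit vectors `e, g` turn with
angular rates `ωe, ωg`, then `d(e·g) = -(e × g)(ωg - ωe)` and `d(e × g) = (e·g)(ωg - ωe)`;
by the quotient rule and `(e·g)² + (e × g)² = 1`, the half-angle tangent
`t = (1 - e·g)/(e × g)` then has derivative `(t / (e × g)) (ωg - ωe)`,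
i.e. `d tan(α/2) = (tan(α/2) / sin α) dα`.
-/

open InnerProductSpace ContinuousLinearMap

theorem norm_inv_norm_sub_smul_self {F : Type*} [NormedAddCommGroup F] [NormedSpace ℝ F]
    {p x : F} (hx : x ≠ p) : ‖‖p - x‖⁻¹ • (p - x)‖ = 1 := by
  simpa using norm_smul_inv_norm (𝕜 := ℝ) (sub_ne_zero.mpr hx.symm)

section Normalize

variable {F : Type*} [NormedAddCommGroup F] [InnerProductSpace ℝ F] {p x : F}

theorem hasFDerivAt_norm_sub (hx : x ≠ p) :
    HasFDerivAt (fun y => ‖p - y‖) (-innerSL ℝ (‖p - x‖⁻¹ • (p - x))) x := by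
  have hr : ‖p - x‖ ≠ 0 := norm_ne_zero_iff.mpr (sub_ne_zero.mpr hx.symm)
  have hsq := ((hasFDerivAt_id x).const_sub p).norm_sq.sqrt (pow_ne_zero 2 hr)
  simp only [Real.sqrt_sq (norm_nonneg _)] at hsq
  refine hsq.congr_fderiv ?_
  ext h
  simp only [id_eq, smul_apply, comp_apply, neg_apply, id_apply, coe_innerSL_apply, inner_neg_right,
    real_inner_smul_left, smul_eq_mul, nsmul_eq_mul]
  ring

theorem hasFDerivAt_inv_norm_sub_smul (hx : x ≠ p) :
    HasFDerivAt (fun y => ‖p - y‖⁻¹ • (p - y))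
      (‖p - x‖⁻¹ • ((innerSL ℝ (‖p - x‖⁻¹ • (p - x))).smulRight (‖p - x‖⁻¹ • (p - x))
        - ContinuousLinearMap.id ℝ F)) x := by
  have hr : ‖p - x‖ ≠ 0 := norm_ne_zero_iff.mpr (sub_ne_zero.mpr hx.symm)
  refine (((hasDerivAt_inv hr).comp_hasFDerivAt x (hasFDerivAt_norm_sub hx)).smul
    ((hasFDerivAt_id x).const_sub p)).congr_fderiv ?_
  ext h
  simp only [add_apply, smul_apply, Function.comp_apply, neg_apply, id_apply, id_eq, sub_apply,
    smulRight_apply, coe_innerSL_apply, real_inner_smul_left, smul_eq_mul]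
  module

end Normalize

theorem dotE_sq_add_crossE_sq (v w : E2) :
    dotE v w ^ 2 + crossE v w ^ 2 = ‖v‖ ^ 2 * ‖w‖ ^ 2 := by
  simp only [dotE, crossE, EuclideanSpace.real_norm_sq_eq, Fin.sum_univ_two]
  ring

theorem inner_smul_add_inner_perpE_smul {e : E2} (he : ‖e‖ = 1) (h : E2) :
    ⟪e, h⟫_ℝ • e + ⟪perpE e, h⟫_ℝ • perpE e = h := by
  have he2 : e 0 ^ 2 + e 1 ^ 2 = 1 := by
    rw [← Fin.sum_univ_two (fun i => e i ^ 2), ← EuclideanSpace.real_norm_sq_eq, he, one_pow]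
  ext i
  fin_cases i <;>
    simp only [PiLp.inner_apply, RCLike.inner_apply, conj_trivial, Fin.sum_univ_two, perpE,
      PiLp.add_apply, PiLp.smul_apply, smul_eq_mul, Matrix.cons_val_zero, Matrix.cons_val_one,
      Matrix.cons_val_fin_one, Fin.zero_eta, Fin.mk_one]
  · linear_combination h 0 * he2
  · linear_combination h 1 * he2

theorem HasFDerivAt.apply_of_smulRight {E ι : Type*} [NormedAddCommGroup E] [NormedSpace ℝ E]
    [Fintype ι] {f : E → EuclideanSpace ℝ ι} {x : E} {ω : E →L[ℝ] ℝ} {v : EuclideanSpace ℝ ι}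
    (hf : HasFDerivAt f (ω.smulRight v) x) (i : ι) :
    HasFDerivAt (fun y => f y i) (v i • ω) x := by
  refine ((PiLp.hasFDerivAt_apply 2 (f x) i).comp x hf).congr_fderiv ?_
  ext h
  simp [mul_comm]

section Rotation

variable {E : Type*} [NormedAddCommGroup E] [NormedSpace ℝ E] {e g : E → E2} {x : E}
  {ωe ωg : E →L[ℝ] ℝ}

theorem HasFDerivAt.dotE_of_perp (he : HasFDerivAt e (ωe.smulRight (perpE (e x))) x)
    (hg : HasFDerivAt g (ωg.smulRight (perpE (g x))) x) :
    HasFDerivAt (fun y => dotE (e y) (g y)) (-crossE (e x) (g x) • (ωg - ωe)) x := by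
  refine (((he.apply_of_smulRight 0).mul (hg.apply_of_smulRight 0)).add
    ((he.apply_of_smulRight 1).mul (hg.apply_of_smulRight 1))).congr_fderiv ?_
  ext h
  simp only [add_apply, smul_apply, sub_apply, smul_eq_mul, perpE, crossE, Matrix.cons_val_zero,
    Matrix.cons_val_one, Matrix.cons_val_fin_one]
  ring

theorem HasFDerivAt.crossE_of_perp (he : HasFDerivAt e (ωe.smulRight (perpE (e x))) x)
    (hg : HasFDerivAt g (ωg.smulRight (perpE (g x))) x) :
    HasFDerivAt (fun y => crossE (e y) (g y)) (dotE (e x) (g x) • (ωg - ωe)) x := by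
  refine (((he.apply_of_smulRight 0).mul (hg.apply_of_smulRight 1)).sub
    ((he.apply_of_smulRight 1).mul (hg.apply_of_smulRight 0))).congr_fderiv ?_
  ext h
  simp only [add_apply, smul_apply, sub_apply, smul_eq_mul, perpE, dotE, Matrix.cons_val_zero,
    Matrix.cons_val_one, Matrix.cons_val_fin_one]
  ring

theorem HasFDerivAt.halfAngleTan_of_perp (he : HasFDerivAt e (ωe.smulRight (perpE (e x))) x)
    (hg : HasFDerivAt g (ωg.smulRight (perpE (g x))) x) (he1 : ‖e x‖ = 1) (hg1 : ‖g x‖ = 1)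
    (hS : crossE (e x) (g x) ≠ 0) :
    HasFDerivAt (fun y => (1 - dotE (e y) (g y)) / crossE (e y) (g y))
      (((1 - dotE (e x) (g x)) / crossE (e x) (g x) / crossE (e x) (g x)) • (ωg - ωe)) x := by
  have hLagrange := dotE_sq_add_crossE_sq (e x) (g x)
  rw [he1, hg1] at hLagrange
  simp only [div_eq_mul_inv]
  refine (((hasFDerivAt_const 1 x).sub (he.dotE_of_perp hg)).mul
    ((hasDerivAt_inv hS).comp_hasFDerivAt x (he.crossE_of_perp hg))).congr_fderiv ?_
  ext h
  simp only [Function.comp_apply, Pi.sub_apply, add_apply, smul_apply, sub_apply, zero_apply,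
    smul_eq_mul]
  field_simp
  linear_combination (ωg h - ωe h) * hLagrange

end Rotation

theorem hasFDerivAt_inv_norm_sub_smul_perpE {p x : E2} (hx : x ≠ p) :
    HasFDerivAt (fun y => ‖p - y‖⁻¹ • (p - y))
      ((-‖p - x‖⁻¹ • innerSL ℝ (perpE (‖p - x‖⁻¹ • (p - x)))).smulRight
        (perpE (‖p - x‖⁻¹ • (p - x)))) x := by
  refine (hasFDerivAt_inv_norm_sub_smul hx).congr_fderiv ?_
  set e := ‖p - x‖⁻¹ • (p - x)
  ext h : 1
  simp only [smul_apply, sub_apply, smulRight_apply, coe_innerSL_apply, id_apply, smul_eq_mul]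
  linear_combination (norm := module)
    ‖p - x‖⁻¹ • inner_smul_add_inner_perpE_smul (norm_inv_norm_sub_smul_self hx) h

/-- Gradient of the half-angle tangent `t_j(y) = tan(α_j(y)/2)
= (1 - e_j·e_{j+1})/(e_j × e_{j+1})`, where `e_j(y), e_{j+1}(y)` are the unit vectors
from `y` towards `p_j = a` and `p_{j+1} = b`:
`∇t_j = (t_j / sin α_j) (e_j^⊥/r_j - e_{j+1}^⊥/r_{j+1})`, provided `sin α_j ≠ 0`
(here `sin α_j = e_j × e_{j+1}`). -/
theorem stmt14 (a b x : E2) (ha : x ≠ a) (hb : x ≠ b)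
    (t : E2 → ℝ)
    (ht : ∀ y, t y =
      (1 - dotE (‖a - y‖⁻¹ • (a - y)) (‖b - y‖⁻¹ • (b - y))) /
        crossE (‖a - y‖⁻¹ • (a - y)) (‖b - y‖⁻¹ • (b - y)))
    (hs : crossE (‖a - x‖⁻¹ • (a - x)) (‖b - x‖⁻¹ • (b - x)) ≠ 0) :
    HasGradientAt t
      ((t x / crossE (‖a - x‖⁻¹ • (a - x)) (‖b - x‖⁻¹ • (b - x))) •
        (‖a - x‖⁻¹ • perpE (‖a - x‖⁻¹ • (a - x)) -
          ‖b - x‖⁻¹ • perpE (‖b - x‖⁻¹ • (b - x)))) x := by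
  have key := (hasFDerivAt_inv_norm_sub_smul_perpE ha).halfAngleTan_of_perp
    (hasFDerivAt_inv_norm_sub_smul_perpE hb)
    (norm_inv_norm_sub_smul_self ha) (norm_inv_norm_sub_smul_self hb) hs
  rw [hasGradientAt_iff_hasFDerivAt, ht x, funext ht]
  refine key.congr_fderiv ?_
  ext h
  simp only [smul_apply, sub_apply, coe_innerSL_apply, toDual_apply_apply, inner_sub_left,
    real_inner_smul_left, smul_eq_mul]
  ring
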